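/- For positive definite Hermitian matrices Φ₀, Φ₁ and positive definite Hermitian weight Ω, with U_Ω := Φ₁^{-1/2} Ω^{-1} Φ₀^{-1/2} (Φ₀^{1/2} Ω Φ₁ Ω Φ₀^{1/2})^{1/2}, the weighted Hellinger quantity tr(Ω Φ₀) + tr(Ω Φ₁) - 2·tr((Φ₀^{1/2} Ω Φ₁ Ω Φ₀^{1/2})^{1/2}) equals tr((Φ₀^{1/2} - Φ₁^{1/2} U_Ω)* Ω (Φ₀^{1/2} - Φ₁^{1/2} U_Ω)). -/

import Mathlib

/-! Write `A = Φ₀^{1/2}` and `S = (A Ω Φ₁ Ω A)^{1/2}`. The factor `Φ₁^{1/2} U_Ω` collapses to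
`(A Ω)⁻¹ S`, and expanding the weighted norm of `A - (A Ω)⁻¹ S` gives `tr(A Ω A) - 2 tr S` plus
`tr(S (Ω A)⁻¹ Ω (A Ω)⁻¹ S)`; cycling the trace and substituting `S² = (A Ω) Φ₁ (A Ω)ᴴ` turns the
last term into `tr(Ω Φ₁)`. -/

open Matrix
open scoped ComplexOrder

/-- The square root of a positive semidefinite matrix, as defined in the older Mathlib
(`Matrix.PosSemidef.sqrt`, removed since). -/
noncomputable def Matrix.PosSemidef.sqrt {n : Type*} {𝕜 : Type*} [Fintype n] [RCLike 𝕜]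
    [DecidableEq n] {A : Matrix n n 𝕜} (hA : A.PosSemidef) : Matrix n n 𝕜 :=
  hA.1.eigenvectorUnitary.1 * diagonal ((↑) ∘ (√·) ∘ hA.1.eigenvalues) *
    (star hA.1.eigenvectorUnitary : Matrix n n 𝕜)

namespace Matrix

section Sqrt

variable {n 𝕜 : Type*} [Fintype n] [RCLike 𝕜] [DecidableEq n] {A : Matrix n n 𝕜}

theorem PosSemidef.sqrt_mul_self (hA : A.PosSemidef) : hA.sqrt * hA.sqrt = A := by
  set U : Matrix n n 𝕜 := hA.1.eigenvectorUnitary.1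
  set d : n → 𝕜 := (↑) ∘ (√·) ∘ hA.1.eigenvalues
  have hsqrt : hA.sqrt = U * diagonal d * star U := rfl
  have hU : star U * U = 1 := Unitary.coe_star_mul_self _
  have hd : diagonal d * diagonal d = diagonal (RCLike.ofReal ∘ hA.1.eigenvalues) := by
    rw [diagonal_mul_diagonal]
    congr 1
    funext i
    simp only [d, Function.comp_apply, ← RCLike.ofReal_mul,
      Real.mul_self_sqrt (hA.eigenvalues_nonneg i)]
  conv_rhs => rw [hA.1.spectral_theorem, Unitary.conjStarAlgAut_apply]
  rw [hsqrt]
  calc U * diagonal d * star U * (U * diagonal d * star U)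
      = U * diagonal d * (star U * U) * diagonal d * star U := by simp only [Matrix.mul_assoc]
    _ = U * (diagonal d * diagonal d) * star U := by rw [hU, Matrix.mul_one, Matrix.mul_assoc U]
    _ = _ := by rw [hd]

theorem PosSemidef.posSemidef_sqrt (hA : A.PosSemidef) : hA.sqrt.PosSemidef := by
  have hd : (diagonal ((↑) ∘ (√·) ∘ hA.1.eigenvalues) : Matrix n n 𝕜).PosSemidef :=
    posSemidef_diagonal_iff.mpr fun i ↦ by simp
  rw [sqrt]
  simpa [star_eq_conjTranspose] using hd.mul_mul_conjTranspose_same hA.1.eigenvectorUnitary.1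

theorem PosDef.isUnit_sqrt (hA : A.PosDef) : IsUnit hA.posSemidef.sqrt :=
  isUnit_mul_self_iff.mp (by rw [hA.posSemidef.sqrt_mul_self]; exact hA.isUnit)

end Sqrt

variable {n R : Type*} [Fintype n]

theorem trace_conjTranspose_sub_mul_mul_sub [Ring R] [StarRing R] (Ω X Y : Matrix n n R) :
    ((X - Y)ᴴ * Ω * (X - Y)).trace =
      (Xᴴ * Ω * X).trace - (Xᴴ * Ω * Y).trace - (Yᴴ * Ω * X).trace + (Yᴴ * Ω * Y).trace := by
  simp only [conjTranspose_sub, sub_mul, mul_sub, trace_sub]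
  abel

theorem trace_conjTranspose_sub_inv_mul_mul_sub [DecidableEq n] [CommRing R] [StarRing R]
    {Ω Φ X S : Matrix n n R} (hΩ : Ω.IsHermitian) (hS : S.IsHermitian)
    (hT : IsUnit (Xᴴ * Ω).det) (hSS : S * S = Xᴴ * Ω * Φ * Ω * X) :
    ((X - (Xᴴ * Ω)⁻¹ * S)ᴴ * Ω * (X - (Xᴴ * Ω)⁻¹ * S)).trace =
      (Xᴴ * Ω * X).trace + (Ω * Φ).trace - 2 * S.trace := by
  set T := Xᴴ * Ω
  have hTH : Tᴴ = Ω * X := by simp [T, hΩ.eq]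
  have hTHu : IsUnit Tᴴ.det := by rw [det_conjTranspose]; exact hT.star
  have cross : Xᴴ * Ω * (T⁻¹ * S) = S := mul_nonsing_inv_cancel_left T S hT
  have cross' : (T⁻¹ * S)ᴴ * Ω * X = S := by
    rw [conjTranspose_mul, hS.eq, conjTranspose_nonsing_inv]
    simp only [Matrix.mul_assoc]
    rw [← hTH, nonsing_inv_mul _ hTHu, Matrix.mul_one]
  have quad : ((T⁻¹ * S)ᴴ * Ω * (T⁻¹ * S)).trace = (Ω * Φ).trace := by
    have hSS' : S * S = T * Φ * Tᴴ := by rw [hSS, hTH]; simp only [T, Matrix.mul_assoc]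
    calc ((T⁻¹ * S)ᴴ * Ω * (T⁻¹ * S)).trace = (Tᴴ⁻¹ * Ω * T⁻¹ * (S * S)).trace := by
          rw [conjTranspose_mul, hS.eq, conjTranspose_nonsing_inv]
          simp only [Matrix.mul_assoc]
          rw [trace_mul_comm]
          simp only [Matrix.mul_assoc]
      _ = (Ω * Φ * (Tᴴ * Tᴴ⁻¹)).trace := by
          rw [hSS']
          simp only [Matrix.mul_assoc, nonsing_inv_mul_cancel_left _ _ hT]
          rw [trace_mul_comm]
          simp only [Matrix.mul_assoc]
      _ = (Ω * Φ).trace := by rw [mul_nonsing_inv _ hTHu, Matrix.mul_one]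
  rw [trace_conjTranspose_sub_mul_mul_sub, cross, cross', quad]
  ring

theorem trace_weighted_factor_distance_eq_of_mul_self [DecidableEq n] [CommRing R] [StarRing R]
    {Φ₀ Φ₁ Ω A B S : Matrix n n R} (hΩ : Ω.IsHermitian) (hΩu : IsUnit Ω) (hA : A.IsHermitian)
    (hAu : IsUnit A) (hAA : A * A = Φ₀) (hBu : IsUnit B) (hS : S.IsHermitian)
    (hSS : S * S = A * Ω * Φ₁ * Ω * A) :
    ((A - B * (B⁻¹ * Ω⁻¹ * A⁻¹ * S))ᴴ * Ω * (A - B * (B⁻¹ * Ω⁻¹ * A⁻¹ * S))).trace =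
      (Ω * Φ₀).trace + (Ω * Φ₁).trace - 2 * S.trace := by
  have hBS : B * (B⁻¹ * Ω⁻¹ * A⁻¹ * S) = (Aᴴ * Ω)⁻¹ * S := by
    rw [hA.eq, mul_inv_rev]
    simp only [Matrix.mul_assoc, mul_nonsing_inv_cancel_left _ _ ((isUnit_iff_isUnit_det B).mp hBu)]
  have hT : IsUnit (Aᴴ * Ω).det := by
    rw [← isUnit_iff_isUnit_det, hA.eq]
    exact hAu.mul hΩu
  have hΦ₀ : (Aᴴ * Ω * A).trace = (Ω * Φ₀).trace := by
    rw [hA.eq, trace_mul_cycle, hAA, trace_mul_comm]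
  rw [hBS, trace_conjTranspose_sub_inv_mul_mul_sub hΩ hS hT (by rwa [hA.eq]), hΦ₀]

end Matrix

theorem weighted_hellinger_as_factor_distance (n : ℕ)
    (Φ₀ Φ₁ Ω : Matrix (Fin n) (Fin n) ℂ)
    (h0 : Φ₀.PosDef) (h1 : Φ₁.PosDef) (hΩ : Ω.PosDef)
    (hS : (h0.posSemidef.sqrt * Ω * Φ₁ * Ω * h0.posSemidef.sqrt).PosSemidef) :
    (Ω * Φ₀).trace.re + (Ω * Φ₁).trace.re - 2 * hS.sqrt.trace.re =
      (((h0.posSemidef.sqrt -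
          h1.posSemidef.sqrt * (h1.posSemidef.sqrt⁻¹ * Ω⁻¹ * h0.posSemidef.sqrt⁻¹ * hS.sqrt))ᴴ *
        Ω *
        (h0.posSemidef.sqrt -
          h1.posSemidef.sqrt * (h1.posSemidef.sqrt⁻¹ * Ω⁻¹ * h0.posSemidef.sqrt⁻¹ * hS.sqrt))).trace).re := by
  rw [trace_weighted_factor_distance_eq_of_mul_self hΩ.isHermitian hΩ.isUnit
    h0.posSemidef.posSemidef_sqrt.isHermitian h0.isUnit_sqrt h0.posSemidef.sqrt_mul_self
    h1.isUnit_sqrt hS.posSemidef_sqrt.isHermitian hS.sqrt_mul_self]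
  simp
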